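/- arXiv:1703.07906 — 3 statements merged into one kernel-verified Lean document; each statement's English description precedes it below -/
import Mathlib

section
/- Let M = (M(α), M(β)) be a Kronecker representation. Then the multiplicity of the simple projective P_1 = (matrix from k^0, i.e., dimension vector (0,1)) in the indecomposable decomposition of M equals d_2 - rank[M(β) M(α)] = dim Coker[M(β) M(α)], and the multiplicity of the simple injective I_1 (dimension vector (1,0)) equals d_1 - rank([M(β); M(α)]) = dim Ker([M(β); M(α)]). -/
/-- A (finite-dimensional) representation of the Kronecker quiver
`1 ⇉ 2`: two matrices between based vector spaces `k^{ι1} → k^{ι2}`. -/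
structure KRep (k : Type) [Field k] where
  ι1 : Type
  ι2 : Type
  [f1 : Fintype ι1]
  [f2 : Fintype ι2]
  [e1 : DecidableEq ι1]
  [e2 : DecidableEq ι2]
  A : Matrix ι2 ι1 k
  B : Matrix ι2 ι1 k

attribute [instance] KRep.f1 KRep.f2 KRep.e1 KRep.e2

variable {k : Type} [Field k]

/-- Isomorphism of Kronecker representations: a pair of invertible matrices
intertwining the two structure matrices. -/
def KIso (M N : KRep k) : Prop :=
  ∃ (S : Matrix N.ι1 M.ι1 k) (T : Matrix N.ι2 M.ι2 k)
    (S' : Matrix M.ι1 N.ι1 k) (T' : Matrix M.ι2 N.ι2 k),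
    S * S' = 1 ∧ S' * S = 1 ∧ T * T' = 1 ∧ T' * T = 1 ∧
    T * M.A = N.A * S ∧ T * M.B = N.B * S

/-- Finite direct sum of Kronecker representations (block diagonal matrices). -/
def KSum {m : ℕ} (V : Fin m → KRep k) : KRep k where
  ι1 := Σ j, (V j).ι1
  ι2 := Σ j, (V j).ι2
  A := Matrix.blockDiagonal' (fun j => (V j).A)
  B := Matrix.blockDiagonal' (fun j => (V j).B)

/-- The `n × n` Jordan cell with eigenvalue `lam`. -/
def jordanCell (n : ℕ) (lam : k) : Matrix (Fin n) (Fin n) k :=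
  fun a b => if a = b then lam else if (a : ℕ) + 1 = (b : ℕ) then 1 else 0

/-- The preprojective indecomposable `P_n = ([E_{n-1}; 0], [0; E_{n-1}])`,
of dimension vector `(n-1, n)`. -/
def Prep (n : ℕ) : KRep k where
  ι1 := Fin (n - 1)
  ι2 := Fin n
  A := fun i j => if (i : ℕ) = (j : ℕ) then 1 else 0
  B := fun i j => if (i : ℕ) = (j : ℕ) + 1 then 1 else 0

/-- The preinjective indecomposable `I_n = ([E_{n-1}, 0], [0, E_{n-1}])`,
of dimension vector `(n, n-1)`. -/
def Irep (n : ℕ) : KRep k where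
  ι1 := Fin n
  ι2 := Fin (n - 1)
  A := fun i j => if (i : ℕ) = (j : ℕ) then 1 else 0
  B := fun i j => if (i : ℕ) + 1 = (j : ℕ) then 1 else 0

/-- The regular indecomposable `R_n(lam) = (E_n, J_n(lam))`. -/
def Rreg (n : ℕ) (lam : k) : KRep k where
  ι1 := Fin n
  ι2 := Fin n
  A := 1
  B := jordanCell n lam

/-- The regular indecomposable `R_n(∞) = (J_n(0), E_n)`. -/
def Rinf (n : ℕ) : KRep k where
  ι1 := Fin n
  ι2 := Fin n
  A := jordanCell n 0
  B := 1

/-- `W` belongs to the list `𝓛` of indecomposable Kronecker representations. -/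
def IsKroneckerIndec (W : KRep k) : Prop :=
  (∃ n, 1 ≤ n ∧ KIso W (Prep n)) ∨ (∃ n, 1 ≤ n ∧ KIso W (Irep n)) ∨
  (∃ n, 1 ≤ n ∧ ∃ lam : k, KIso W (Rreg n lam)) ∨ (∃ n, 1 ≤ n ∧ KIso W (Rinf n))

open Classical

/-! The multiplicity of `I_1` is read off from the common kernel `Ker [M(β); M(α)]`, that of
`P_1` from the common kernel of the transposes, which is dual to `Coker [M(β) M(α)]`. Its
dimension is an isomorphism invariant and additive over direct sums; on the indecomposables it
is `1` for `I_1` and `0` otherwise, and transposition turns `P_n` into `I_n`. -/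

open Matrix Module LinearMap

theorem Fin.sum_ite_val_eq_mul {R : Type*} [Semiring R] {m : ℕ} (x : Fin m → R) (j₀ : Fin m)
    {a : ℕ} (ha : a = j₀) :
    ∑ j : Fin m, (if a = (j : ℕ) then (1 : R) else 0) * x j = x j₀ := by
  subst ha
  rw [Finset.sum_eq_single j₀] <;> simp +contextual [Fin.ext_iff, eq_comm]

theorem Matrix.blockDiagonal'_mulVec_apply {R : Type*} [Semiring R] {o : Type*} [Fintype o]
    [DecidableEq o] {m n : o → Type*} [∀ j, Fintype (n j)] (M : ∀ j, Matrix (m j) (n j) R)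
    (x : (Σ j, n j) → R) (j : o) (i : m j) :
    (blockDiagonal' M *ᵥ x) ⟨j, i⟩ = (M j *ᵥ fun i' => x ⟨j, i'⟩) i := by
  simp only [mulVec, dotProduct, ← Finset.univ_sigma_univ, Finset.sum_sigma]
  rw [Finset.sum_eq_single j]
  · simp
  · intro j' _ hj'
    simp [blockDiagonal'_apply_ne _ _ _ (Ne.symm hj')]
  · simp

namespace KRep

abbrev dual (M : KRep k) : KRep k where
  ι1 := M.ι2
  ι2 := M.ι1
  A := M.Aᵀ
  B := M.Bᵀ

def jointKer (M : KRep k) : Submodule k (M.ι1 → k) :=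
  ker (fromRows M.B M.A).mulVecLin

theorem mem_jointKer {M : KRep k} {x : M.ι1 → k} :
    x ∈ M.jointKer ↔ M.B *ᵥ x = 0 ∧ M.A *ᵥ x = 0 := by
  simp only [jointKer, mem_ker, mulVecLin_apply, fromRows_mulVec, funext_iff, Sum.forall,
    Sum.elim_inl, Sum.elim_inr, Pi.zero_apply]

theorem jointKer_eq_bot_of_ker_A_eq_bot {M : KRep k} (h : ker M.A.mulVecLin = ⊥) :
    M.jointKer = ⊥ :=
  eq_bot_iff.2 fun _ hx => h ▸ (mem_jointKer.1 hx).2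

theorem jointKer_eq_bot_of_ker_B_eq_bot {M : KRep k} (h : ker M.B.mulVecLin = ⊥) :
    M.jointKer = ⊥ :=
  eq_bot_iff.2 fun _ hx => h ▸ (mem_jointKer.1 hx).1

theorem finrank_jointKer (M : KRep k) :
    finrank k M.jointKer = Fintype.card M.ι1 - (fromRows M.B M.A).rank := by
  have := (fromRows M.B M.A).mulVecLin.finrank_range_add_finrank_ker
  rw [finrank_fintype_fun_eq_card] at this
  exact Nat.eq_sub_of_add_eq' this

theorem finrank_dual_jointKer (M : KRep k) :
    finrank k M.dual.jointKer = Fintype.card M.ι2 - (fromCols M.B M.A).rank := by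
  rw [finrank_jointKer, ← rank_transpose (fromCols M.B M.A), transpose_fromCols]

theorem finrank_dual_jointKer_eq_finrank_coker (M : KRep k) :
    finrank k M.dual.jointKer =
      finrank k ((M.ι2 → k) ⧸ range (fromCols M.B M.A).mulVecLin) := by
  have := (range (fromCols M.B M.A).mulVecLin).finrank_quotient_add_finrank
  rw [finrank_fintype_fun_eq_card] at this
  rw [finrank_dual_jointKer, ← this]
  exact Nat.add_sub_cancel _ _

theorem dual_kSum {m : ℕ} (V : Fin m → KRep k) :
    (KSum V).dual = KSum fun j => (V j).dual := by
  simp only [KSum, dual, blockDiagonal'_transpose]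

theorem mem_jointKer_kSum {m : ℕ} {V : Fin m → KRep k} {x : (Σ j, (V j).ι1) → k} :
    x ∈ (KSum V).jointKer ↔ ∀ j, (fun i => x ⟨j, i⟩) ∈ (V j).jointKer := by
  refine mem_jointKer.trans ?_
  change blockDiagonal' (fun j => (V j).B) *ᵥ x = 0 ∧
    blockDiagonal' (fun j => (V j).A) *ᵥ x = 0 ↔ _
  simp only [mem_jointKer, funext_iff, Sigma.forall, Pi.zero_apply,
    blockDiagonal'_mulVec_apply, forall_and]

theorem finrank_jointKer_kSum {m : ℕ} (V : Fin m → KRep k) :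
    finrank k (KSum V).jointKer = ∑ j, finrank k (V j).jointKer := by
  let e : (KSum V).jointKer ≃ₗ[k] ∀ j, (V j).jointKer :=
    { toFun := fun x j => ⟨fun i => x.1 ⟨j, i⟩, mem_jointKer_kSum.1 x.2 j⟩
      invFun := fun y => ⟨fun p => (y p.1).1 p.2, mem_jointKer_kSum.2 fun j => (y j).2⟩
      map_add' := fun _ _ => rfl
      map_smul' := fun _ _ => rfl
      left_inv := fun _ => rfl
      right_inv := fun _ => rfl }
  rw [e.finrank_eq, finrank_pi_fintype]

end KRep

theorem KIso.symm {M N : KRep k} (h : KIso M N) : KIso N M := by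
  obtain ⟨S, T, S', T', hSS', hS'S, hTT', hT'T, hA, hB⟩ := h
  have swap : ∀ {X : Matrix M.ι2 M.ι1 k} {Y : Matrix N.ι2 N.ι1 k}, T * X = Y * S →
      T' * Y = X * S' := fun {X Y} h => by
    rw [← Matrix.mul_one (T' * Y), ← hSS', ← Matrix.mul_assoc, Matrix.mul_assoc T', ← h,
      ← Matrix.mul_assoc, hT'T, Matrix.one_mul]
  exact ⟨S', T', S, T, hS'S, hSS', hT'T, hTT', swap hA, swap hB⟩

theorem KIso.dual {M N : KRep k} (h : KIso M N) : KIso M.dual N.dual := by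
  obtain ⟨S, T, S', T', hSS', hS'S, hTT', hT'T, hA, hB⟩ := h.symm
  refine ⟨Tᵀ, Sᵀ, T'ᵀ, S'ᵀ, ?_, ?_, ?_, ?_, ?_, ?_⟩
  · rw [← transpose_mul, hT'T, transpose_one]
  · rw [← transpose_mul, hTT', transpose_one]
  · rw [← transpose_mul, hS'S, transpose_one]
  · rw [← transpose_mul, hSS', transpose_one]
  · rw [← transpose_mul, ← transpose_mul, hA]
  · rw [← transpose_mul, ← transpose_mul, hB]

theorem KIso.finrank_jointKer_le {M N : KRep k} (h : KIso M N) :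
    finrank k M.jointKer ≤ finrank k N.jointKer := by
  obtain ⟨S, T, S', T', -, hS'S, -, -, hA, hB⟩ := h
  have hS : Function.Injective S.mulVec := fun x y hxy => by
    simpa [mulVec_mulVec, hS'S] using congrArg (S' *ᵥ ·) hxy
  have hmaps : ∀ x ∈ M.jointKer, S.mulVecLin x ∈ N.jointKer := fun x hx => by
    obtain ⟨hBx, hAx⟩ := KRep.mem_jointKer.1 hx
    refine KRep.mem_jointKer.2 ⟨?_, ?_⟩
    · rw [mulVecLin_apply, mulVec_mulVec, ← hB, ← mulVec_mulVec, hBx, mulVec_zero]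
    · rw [mulVecLin_apply, mulVec_mulVec, ← hA, ← mulVec_mulVec, hAx, mulVec_zero]
  exact LinearMap.finrank_le_finrank_of_injective (f := S.mulVecLin.restrict hmaps)
    fun x y hxy => Subtype.ext (hS (congrArg Subtype.val hxy))

theorem KIso.finrank_jointKer_eq {M N : KRep k} (h : KIso M N) :
    finrank k M.jointKer = finrank k N.jointKer :=
  h.finrank_jointKer_le.antisymm h.symm.finrank_jointKer_le

theorem prep_A_mulVec (n : ℕ) (x : Fin (n - 1) → k) (j : Fin (n - 1)) :
    ((Prep n).A *ᵥ x) ⟨j, by omega⟩ = x j :=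
  Fin.sum_ite_val_eq_mul x j rfl

theorem irep_A_mulVec (n : ℕ) (x : Fin n → k) (j : Fin n) (hj : (j : ℕ) < n - 1) :
    ((Irep n).A *ᵥ x) ⟨j, hj⟩ = x j :=
  Fin.sum_ite_val_eq_mul x j rfl

theorem irep_B_mulVec (n : ℕ) (x : Fin n → k) (j : Fin n) (hj : 1 ≤ (j : ℕ)) :
    ((Irep n).B *ᵥ x) ⟨j - 1, by omega⟩ = x j :=
  Fin.sum_ite_val_eq_mul x j (Nat.sub_add_cancel hj)

theorem jointKer_prep (n : ℕ) : (Prep (k := k) n).jointKer = ⊥ :=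
  KRep.jointKer_eq_bot_of_ker_A_eq_bot <| ker_eq_bot'.2 fun x hx =>
    funext fun (j : Fin (n - 1)) => (prep_A_mulVec n x j).symm.trans (congrFun hx _)

theorem jointKer_irep {n : ℕ} (hn : 2 ≤ n) : (Irep (k := k) n).jointKer = ⊥ := by
  refine eq_bot_iff.2 fun x hx => (Submodule.mem_bot k).2 (funext fun (j : Fin n) => ?_)
  obtain ⟨hB, hA⟩ := KRep.mem_jointKer.1 hx
  by_cases hj : (j : ℕ) < n - 1
  · exact (irep_A_mulVec n x j hj).symm.trans (congrFun hA _)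
  · exact (irep_B_mulVec n x j (by omega)).symm.trans (congrFun hB _)

theorem finrank_jointKer_irep_one : finrank k (Irep (k := k) 1).jointKer = 1 := by
  have : (Irep (k := k) 1).jointKer = ⊤ := eq_top_iff.2 fun _ _ =>
    KRep.mem_jointKer.2 ⟨funext fun (i : Fin 0) => i.elim0, funext fun (i : Fin 0) => i.elim0⟩
  rw [this, finrank_top]
  exact finrank_fin_fun k

theorem prep_dual (n : ℕ) : (Prep (k := k) n).dual = Irep n := by
  unfold KRep.dual Prep Irep
  congr 1 <;> ext i j <;> exact if_congr eq_comm rfl rfl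

theorem irep_dual (n : ℕ) : (Irep (k := k) n).dual = Prep n := by
  unfold KRep.dual Prep Irep
  congr 1 <;> ext i j <;> exact if_congr eq_comm rfl rfl

theorem jointKer_rreg (n : ℕ) (lam : k) : (Rreg n lam).jointKer = ⊥ :=
  KRep.jointKer_eq_bot_of_ker_A_eq_bot <| by
    change ker (1 : Matrix (Fin n) (Fin n) k).mulVecLin = ⊥
    simp

theorem jointKer_rreg_dual (n : ℕ) (lam : k) : (Rreg n lam).dual.jointKer = ⊥ :=
  KRep.jointKer_eq_bot_of_ker_A_eq_bot <| by
    change ker (1 : Matrix (Fin n) (Fin n) k)ᵀ.mulVecLin = ⊥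
    simp

theorem jointKer_rinf (n : ℕ) : (Rinf (k := k) n).jointKer = ⊥ :=
  KRep.jointKer_eq_bot_of_ker_B_eq_bot <| by
    change ker (1 : Matrix (Fin n) (Fin n) k).mulVecLin = ⊥
    simp

theorem jointKer_rinf_dual (n : ℕ) : (Rinf (k := k) n).dual.jointKer = ⊥ :=
  KRep.jointKer_eq_bot_of_ker_B_eq_bot <| by
    change ker (1 : Matrix (Fin n) (Fin n) k)ᵀ.mulVecLin = ⊥
    simp

theorem IsKroneckerIndec.finrank_jointKer {W : KRep k} (hW : IsKroneckerIndec W) :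
    finrank k W.jointKer = if KIso W (Irep 1) then 1 else 0 := by
  split_ifs with h1
  · rw [h1.finrank_jointKer_eq, finrank_jointKer_irep_one]
  rcases hW with ⟨n, -, h⟩ | ⟨n, hn, h⟩ | ⟨n, -, lam, h⟩ | ⟨n, -, h⟩ <;>
    rw [h.finrank_jointKer_eq]
  · rw [jointKer_prep, finrank_bot]
  · obtain rfl | hn := hn.eq_or_lt
    · exact absurd h h1
    · rw [jointKer_irep hn, finrank_bot]
  · rw [jointKer_rreg, finrank_bot]
  · rw [jointKer_rinf, finrank_bot]

theorem IsKroneckerIndec.finrank_dual_jointKer {W : KRep k} (hW : IsKroneckerIndec W) :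
    finrank k W.dual.jointKer = if KIso W (Prep 1) then 1 else 0 := by
  split_ifs with h1
  · rw [h1.dual.finrank_jointKer_eq, prep_dual, finrank_jointKer_irep_one]
  rcases hW with ⟨n, hn, h⟩ | ⟨n, -, h⟩ | ⟨n, -, lam, h⟩ | ⟨n, -, h⟩ <;>
    rw [h.dual.finrank_jointKer_eq]
  · obtain rfl | hn := hn.eq_or_lt
    · exact absurd h h1
    · rw [prep_dual, jointKer_irep hn, finrank_bot]
  · rw [irep_dual, jointKer_prep, finrank_bot]
  · rw [jointKer_rreg_dual, finrank_bot]
  · rw [jointKer_rinf_dual, finrank_bot]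

theorem kronecker_simple_multiplicities_general (M : KRep k)
    (m : ℕ) (V : Fin m → KRep k) (hV : ∀ j, IsKroneckerIndec (V j))
    (hiso : KIso M (KSum V)) :
    ((Finset.univ.filter (fun j => KIso (V j) (Prep (k := k) 1))).card
        = Fintype.card M.ι2 - (Matrix.fromCols M.B M.A).rank ∧
      (Finset.univ.filter (fun j => KIso (V j) (Prep (k := k) 1))).card
        = Module.finrank k
            ((M.ι2 → k) ⧸ LinearMap.range (Matrix.fromCols M.B M.A).mulVecLin)) ∧
    ((Finset.univ.filter (fun j => KIso (V j) (Irep (k := k) 1))).card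
        = Fintype.card M.ι1 - (Matrix.fromRows M.B M.A).rank ∧
      (Finset.univ.filter (fun j => KIso (V j) (Irep (k := k) 1))).card
        = Module.finrank k (LinearMap.ker (Matrix.fromRows M.B M.A).mulVecLin)) := by
  have hP : (Finset.univ.filter fun j => KIso (V j) (Prep (k := k) 1)).card =
      finrank k M.dual.jointKer := by
    rw [hiso.dual.finrank_jointKer_eq, KRep.dual_kSum, KRep.finrank_jointKer_kSum,
      Finset.card_filter]
    exact Finset.sum_congr rfl fun j _ => (hV j).finrank_dual_jointKer.symm
  have hI : (Finset.univ.filter fun j => KIso (V j) (Irep (k := k) 1)).card =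
      finrank k M.jointKer := by
    rw [hiso.finrank_jointKer_eq, KRep.finrank_jointKer_kSum, Finset.card_filter]
    exact Finset.sum_congr rfl fun j _ => (hV j).finrank_jointKer.symm
  exact ⟨⟨hP.trans M.finrank_dual_jointKer,
    hP.trans M.finrank_dual_jointKer_eq_finrank_coker⟩, hI.trans M.finrank_jointKer, hI⟩

/-- if the Kronecker representation `M` decomposes as `⊕_j V j` with each
`V j` an indecomposable Kronecker representation, then the multiplicity of the simple
projective `P_1` equals `d_2 - rank [M(β) M(α)] = dim Coker [M(β) M(α)]` and the
multiplicity of the simple injective `I_1` equals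
`d_1 - rank [M(β); M(α)] = dim Ker [M(β); M(α)]`. -/
theorem kronecker_simple_multiplicities [IsAlgClosed k] (M : KRep k)
    (m : ℕ) (V : Fin m → KRep k) (hV : ∀ j, IsKroneckerIndec (V j))
    (hiso : KIso M (KSum V)) :
    ((Finset.univ.filter (fun j => KIso (V j) (Prep (k := k) 1))).card
        = Fintype.card M.ι2 - (Matrix.fromCols M.B M.A).rank ∧
      (Finset.univ.filter (fun j => KIso (V j) (Prep (k := k) 1))).card
        = Module.finrank k
            ((M.ι2 → k) ⧸ LinearMap.range (Matrix.fromCols M.B M.A).mulVecLin)) ∧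
    ((Finset.univ.filter (fun j => KIso (V j) (Irep (k := k) 1))).card
        = Fintype.card M.ι1 - (Matrix.fromRows M.B M.A).rank ∧
      (Finset.univ.filter (fun j => KIso (V j) (Irep (k := k) 1))).card
        = Module.finrank k (LinearMap.ker (Matrix.fromRows M.B M.A).mulVecLin)) :=
  kronecker_simple_multiplicities_general M m V hV hiso
end

section
/- Let M be a Kronecker representation with dimension vector (d_1, d_2), and let p_n(M) := rank P_n(M) for n ≥ 2, p_1(M) := 0, where P_n(M) is the block matrix with n-1 block rows and n block columns with M(β) on the block diagonal and M(α) on the block superdiagonal. Then for n ≥ 2, the multiplicity of the preprojective indecomposable P_n in the decomposition of M equals 2p_n(M) - p_{n-1}(M) - p_{n+1}(M). -/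
variable {k : Type} [Field k]

/-- The block matrix `P_n(M)` with `n - 1` block rows and `n` block columns, with
`M(β)` on the block diagonal and `M(α)` on the block superdiagonal
(`P_1(M)` is empty, so `p_1(M) = rank P_1(M) = 0`). -/
def prepBlockMat (M : KRep k) (n : ℕ) : Matrix (Fin (n - 1) × M.ι2) (Fin n × M.ι1) k :=
  fun rp cq =>
    if (cq.1 : ℕ) = (rp.1 : ℕ) then M.B rp.2 cq.2
    else if (cq.1 : ℕ) = (rp.1 : ℕ) + 1 then M.A rp.2 cq.2 else 0

open Classical

/-!
Write `p_m(M) = rank P_m(M)`. It is invariant under isomorphism (`P_m` of an isomorphic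
representation is `P_m(M)` multiplied on both sides by invertible block-diagonal matrices) and
additive on direct sums (`P_m` of a direct sum is block diagonal after reordering), so it suffices
to evaluate `2 p_n - p_{n-1} - p_{n+1}` on each indecomposable.

If `M(α)` or `M(β)` has a right inverse, the equations `M(β) x_i + M(α) x_{i+1} = b_i` can be
solved recursively, so `P_m(M)` is surjective and `p_m(M) = (m - 1) d₂`. This covers `I_t`,
`R_t(λ)` and `R_t(∞)`, whose `p_m` is therefore linear in `m ≥ 1`. For `P_t`, the kernel
equations of `P_m(P_t)` propagate along diagonals and force `P_m(P_t)` to be injective when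
`t ≤ m`; since `P_m(P_t)ᵀ` is `P_t(P_m)` up to reindexing, `p_m(P_t) = m t - max m t` for all
`m, t ≥ 1`. The second difference of `-max m t` at `m = n` is `1` if `t = n` and `0` otherwise.
-/

open Matrix Kronecker

namespace Matrix

variable {R K : Type*} [CommSemiring R] [Field K]

section BlockDiagonal

variable {ι : Type*} [Fintype ι] [DecidableEq ι] {m' n' : ι → Type*} [∀ i, Fintype (n' i)]

theorem blockDiagonal'_mulVec_apply_s16 (A : ∀ i, Matrix (m' i) (n' i) R) (x : (Σ i, n' i) → R)
    (p : Σ i, m' i) : (blockDiagonal' A *ᵥ x) p = (A p.1 *ᵥ fun c => x ⟨p.1, c⟩) p.2 := by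
  obtain ⟨i, r⟩ := p
  simp only [mulVec, dotProduct, Fintype.sum_sigma]
  rw [Finset.sum_eq_single i (fun j _ hj => by simp [blockDiagonal'_apply_ne _ _ _ (Ne.symm hj)])
    (by simp)]
  simp [blockDiagonal'_apply_eq]

def kerBlockDiagonal'Equiv (A : ∀ i, Matrix (m' i) (n' i) R) :
    LinearMap.ker (blockDiagonal' A).mulVecLin ≃ₗ[R] ∀ i, LinearMap.ker (A i).mulVecLin where
  toFun x i := ⟨fun c => x.1 ⟨i, c⟩, LinearMap.mem_ker.mpr <| funext fun r => by
    simpa only [mulVecLin_apply, blockDiagonal'_mulVec_apply_s16, Pi.zero_apply] using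
      congrFun (LinearMap.mem_ker.mp x.2) ⟨i, r⟩⟩
  invFun y := ⟨fun p => (y p.1).1 p.2, LinearMap.mem_ker.mpr <| funext fun p => by
    simpa only [mulVecLin_apply, blockDiagonal'_mulVec_apply_s16, Pi.zero_apply] using
      congrFun (LinearMap.mem_ker.mp (y p.1).2) p.2⟩
  map_add' _ _ := rfl
  map_smul' _ _ := rfl
  left_inv _ := rfl
  right_inv _ := rfl

theorem rank_blockDiagonal' [∀ i, Fintype (m' i)] (A : ∀ i, Matrix (m' i) (n' i) K) :
    (blockDiagonal' A).rank = ∑ i, (A i).rank := by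
  have hsum := (blockDiagonal' A).mulVecLin.finrank_range_add_finrank_ker
  have hblock := fun i => (A i).mulVecLin.finrank_range_add_finrank_ker
  rw [(kerBlockDiagonal'Equiv A).finrank_eq, Module.finrank_pi_fintype] at hsum
  simp only [Module.finrank_fintype_fun_eq_card, Fintype.card_sigma] at hsum hblock
  rw [← Finset.sum_congr rfl fun i _ => hblock i, Finset.sum_add_distrib] at hsum
  exact Nat.add_right_cancel hsum

end BlockDiagonal

variable {m n : Type*}

theorem rank_eq_card_height_of_surjective [Fintype m] [Fintype n] (P : Matrix m n K)
    (h : Function.Surjective P.mulVec) : P.rank = Fintype.card m := by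
  rw [rank, LinearMap.range_eq_top.mpr h, finrank_top, Module.finrank_fintype_fun_eq_card]

theorem rank_eq_card_width_of_injective [Fintype n] [DecidableEq n] (P : Matrix m n K)
    (h : Function.Injective P.mulVec) : P.rank = Fintype.card n := by
  rw [rank, LinearMap.finrank_range_of_inj h, Module.finrank_fintype_fun_eq_card]

end Matrix

def Equiv.prodSigmaDistrib {ι : Type*} (α : Type*) (β : ι → Type*) :
    α × (Σ i, β i) ≃ Σ i, α × β i :=
  (Equiv.prodComm _ _).trans
    ((Equiv.sigmaProdDistrib _ _).trans (Equiv.sigmaCongrRight fun _ => Equiv.prodComm _ _))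

def KRep.swap (M : KRep k) : KRep k := { M with A := M.B, B := M.A }

def blockDiagPattern (m : ℕ) : Matrix (Fin (m - 1)) (Fin m) k :=
  of fun i j => if (j : ℕ) = i then 1 else 0

def blockSuperdiagPattern (m : ℕ) : Matrix (Fin (m - 1)) (Fin m) k :=
  of fun i j => if (j : ℕ) = i + 1 then 1 else 0

theorem prepBlockMat_eq_kronecker (M : KRep k) (m : ℕ) :
    prepBlockMat M m = blockDiagPattern m ⊗ₖ M.B + blockSuperdiagPattern m ⊗ₖ M.A := by
  ext ⟨i, r⟩ ⟨j, c⟩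
  simp only [prepBlockMat, blockDiagPattern, blockSuperdiagPattern, Matrix.add_apply,
    kroneckerMap_apply, of_apply]
  split_ifs <;> first | omega | simp

theorem prepBlockMat_eq_mul_of_eq_mul {M N : KRep k} (T : Matrix N.ι2 M.ι2 k)
    (S : Matrix M.ι1 N.ι1 k) (hA : N.A = T * M.A * S) (hB : N.B = T * M.B * S) (m : ℕ) :
    prepBlockMat N m = ((1 : Matrix (Fin (m - 1)) (Fin (m - 1)) k) ⊗ₖ T) * prepBlockMat M m *
      ((1 : Matrix (Fin m) (Fin m) k) ⊗ₖ S) := by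
  rw [prepBlockMat_eq_kronecker, prepBlockMat_eq_kronecker, hA, hB, Matrix.mul_add,
    Matrix.add_mul, ← mul_kronecker_mul, ← mul_kronecker_mul, ← mul_kronecker_mul,
    ← mul_kronecker_mul, Matrix.one_mul, Matrix.one_mul, Matrix.mul_one, Matrix.mul_one]

theorem rank_prepBlockMat_le_of_eq_mul {M N : KRep k} (T : Matrix N.ι2 M.ι2 k)
    (S : Matrix M.ι1 N.ι1 k) (hA : N.A = T * M.A * S) (hB : N.B = T * M.B * S) (m : ℕ) :
    (prepBlockMat N m).rank ≤ (prepBlockMat M m).rank := by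
  rw [prepBlockMat_eq_mul_of_eq_mul T S hA hB]
  exact (rank_mul_le_left _ _).trans (rank_mul_le_right _ _)

namespace KIso

variable {M N : KRep k}

theorem rank_prepBlockMat_eq (h : KIso M N) (m : ℕ) :
    (prepBlockMat M m).rank = (prepBlockMat N m).rank := by
  obtain ⟨S, T, S', T', hSS', -, -, hT'T, hA, hB⟩ := h
  have cancel_right : ∀ X : Matrix N.ι2 N.ι1 k, X = X * S * S' := fun X => by
    rw [Matrix.mul_assoc, hSS', Matrix.mul_one]
  have cancel_left : ∀ X : Matrix M.ι2 M.ι1 k, X = T' * (T * X) := fun X => by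
    rw [← Matrix.mul_assoc, hT'T, Matrix.one_mul]
  apply le_antisymm
  · refine rank_prepBlockMat_le_of_eq_mul T' S ?_ ?_ m
    · rw [cancel_left M.A, hA, Matrix.mul_assoc]
    · rw [cancel_left M.B, hB, Matrix.mul_assoc]
  · refine rank_prepBlockMat_le_of_eq_mul T S' ?_ ?_ m
    · rw [cancel_right N.A, ← hA]
    · rw [cancel_right N.B, ← hB]

theorem card_ι1_eq (h : KIso M N) : Fintype.card M.ι1 = Fintype.card N.ι1 := by
  obtain ⟨S, -, S', -, hSS', hS'S, -⟩ := h
  exact (square_of_invertible S S' hSS' hS'S).symm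

theorem card_ι2_eq (h : KIso M N) : Fintype.card M.ι2 = Fintype.card N.ι2 := by
  obtain ⟨-, T, -, T', -, -, hTT', hT'T, -⟩ := h
  exact (square_of_invertible T T' hTT' hT'T).symm

end KIso

theorem rank_prepBlockMat_swap (M : KRep k) (m : ℕ) :
    (prepBlockMat M.swap m).rank = (prepBlockMat M m).rank := by
  have hrev : prepBlockMat M.swap m = (prepBlockMat M m).submatrix
      (Fin.revPerm.prodCongr (Equiv.refl _)) (Fin.revPerm.prodCongr (Equiv.refl _)) := by
    ext ⟨i, r⟩ ⟨j, c⟩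
    simp only [prepBlockMat, KRep.swap, submatrix_apply, Equiv.prodCongr_apply, Prod.map,
      Fin.revPerm_apply, Fin.val_rev]
    have := i.2
    have := j.2
    split_ifs <;> first | omega | rfl
  rw [hrev]
  exact rank_submatrix _ _ _

theorem prepBlockMat_kSum {m : ℕ} (V : Fin m → KRep k) (n : ℕ) :
    prepBlockMat (KSum V) n = (blockDiagonal' fun j => prepBlockMat (V j) n).submatrix
      (Equiv.prodSigmaDistrib _ _) (Equiv.prodSigmaDistrib _ _) := by
  ext ⟨i, j, r⟩ ⟨i', j', c⟩
  by_cases hj : j = j'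
  · subst hj
    simp [prepBlockMat, KSum, Equiv.prodSigmaDistrib, blockDiagonal'_apply_eq]
  · simp [prepBlockMat, KSum, Equiv.prodSigmaDistrib, blockDiagonal'_apply_ne _ _ _ hj]

theorem rank_prepBlockMat_kSum {m : ℕ} (V : Fin m → KRep k) (n : ℕ) :
    (prepBlockMat (KSum V) n).rank = ∑ j, (prepBlockMat (V j) n).rank := by
  rw [prepBlockMat_kSum, ← rank_blockDiagonal']
  exact rank_submatrix _ _ _

theorem prepBlockMat_mulVec (M : KRep k) (n : ℕ) (x : Fin (n + 1) × M.ι1 → k) (i : Fin n)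
    (r : M.ι2) : (prepBlockMat M (n + 1) *ᵥ x) (i, r) =
      (M.B *ᵥ fun c => x (i.castSucc, c)) r + (M.A *ᵥ fun c => x (i.succ, c)) r := by
  have hentry : ∀ j c, prepBlockMat M (n + 1) (i, r) (j, c) =
      (if j = i.castSucc then M.B r c else 0) + (if j = i.succ then M.A r c else 0) := by
    intro j c
    simp only [prepBlockMat, Fin.ext_iff, Fin.val_castSucc, Fin.val_succ]
    split_ifs <;> first | omega | simp
  simp [mulVec, dotProduct, Fintype.sum_prod_type, hentry, add_mul, Finset.sum_add_distrib]

theorem prepBlockMat_mulVec_surjective (M : KRep k) {A' : Matrix M.ι1 M.ι2 k}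
    (hA : M.A * A' = 1) (n : ℕ) : Function.Surjective (prepBlockMat M (n + 1)).mulVec := by
  intro b
  let rhs : ℕ → M.ι2 → k := fun i r => if h : i < n then b (⟨i, h⟩, r) else 0
  let x : ℕ → M.ι1 → k := fun i => Nat.rec 0 (fun i xi => A' *ᵥ (rhs i - M.B *ᵥ xi)) i
  refine ⟨fun p => x p.1 p.2, funext fun ⟨i, r⟩ => ?_⟩
  have hx : x (i + 1) = A' *ᵥ (rhs i - M.B *ᵥ x i) := rfl
  rw [prepBlockMat_mulVec]
  simp only [Fin.val_castSucc, Fin.val_succ, hx, mulVec_mulVec, hA, one_mulVec, Pi.sub_apply,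
    add_sub_cancel, rhs]
  exact dif_pos (show (i : ℕ) < n from i.2)

theorem rank_prepBlockMat_of_A_mul_eq_one (M : KRep k) {A' : Matrix M.ι1 M.ι2 k}
    (hA : M.A * A' = 1) (m : ℕ) : (prepBlockMat M m).rank = (m - 1) * Fintype.card M.ι2 := by
  cases m with
  | zero => simpa using rank_le_card_height (prepBlockMat M 0)
  | succ n =>
    rw [rank_eq_card_height_of_surjective _ (prepBlockMat_mulVec_surjective M hA n)]
    simp

theorem rank_prepBlockMat_of_B_mul_eq_one (M : KRep k) {B' : Matrix M.ι1 M.ι2 k}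
    (hB : M.B * B' = 1) (m : ℕ) : (prepBlockMat M m).rank = (m - 1) * Fintype.card M.ι2 := by
  rw [← rank_prepBlockMat_swap]
  exact rank_prepBlockMat_of_A_mul_eq_one M.swap hB m

theorem card_prep_ι1 (t : ℕ) : Fintype.card (Prep t : KRep k).ι1 = t - 1 := Fintype.card_fin _

theorem card_prep_ι2 (t : ℕ) : Fintype.card (Prep t : KRep k).ι2 = t := Fintype.card_fin _

theorem card_irep_ι1 (t : ℕ) : Fintype.card (Irep t : KRep k).ι1 = t := Fintype.card_fin _

theorem card_irep_ι2 (t : ℕ) : Fintype.card (Irep t : KRep k).ι2 = t - 1 := Fintype.card_fin _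

theorem card_rreg_ι1 (t : ℕ) (lam : k) : Fintype.card (Rreg t lam).ι1 = t := Fintype.card_fin _

theorem card_rreg_ι2 (t : ℕ) (lam : k) : Fintype.card (Rreg t lam).ι2 = t := Fintype.card_fin _

theorem card_rinf_ι1 (t : ℕ) : Fintype.card (Rinf t : KRep k).ι1 = t := Fintype.card_fin _

theorem card_rinf_ι2 (t : ℕ) : Fintype.card (Rinf t : KRep k).ι2 = t := Fintype.card_fin _

theorem rank_prepBlockMat_irep (t m : ℕ) :
    (prepBlockMat (Irep t : KRep k) m).rank = (m - 1) * (t - 1) := by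
  have hA : (Irep t : KRep k).A * (Irep t : KRep k).Aᵀ = 1 := by
    ext ⟨i, hi⟩ ⟨j, hj⟩
    change ∑ c : Fin t, (if i = (c : ℕ) then (1 : k) else 0) * (if j = (c : ℕ) then 1 else 0)
      =
        if (⟨i, hi⟩ : Fin (t - 1)) = ⟨j, hj⟩ then 1 else 0
    rw [Fintype.sum_eq_single ⟨i, by omega⟩ fun c hc => by
      rw [if_neg fun hic => hc (Fin.ext (Eq.symm hic)), zero_mul]]
    simp [Fin.ext_iff, eq_comm]
  rw [rank_prepBlockMat_of_A_mul_eq_one _ hA, card_irep_ι2]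

theorem rank_prepBlockMat_rreg (t m : ℕ) (lam : k) :
    (prepBlockMat (Rreg t lam) m).rank = (m - 1) * t := by
  rw [rank_prepBlockMat_of_A_mul_eq_one _ (Matrix.mul_one (Rreg t lam).A), card_rreg_ι2]

theorem rank_prepBlockMat_rinf (t m : ℕ) :
    (prepBlockMat (Rinf t : KRep k) m).rank = (m - 1) * t := by
  rw [rank_prepBlockMat_of_B_mul_eq_one _ (Matrix.mul_one (Rinf t : KRep k).B), card_rinf_ι2]

/- Stated on `(Prep t).ι1`, `(Prep t).ι2` rather than on `Fin` so that they can rewrite the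
terms produced by `prepBlockMat_mulVec`. -/
theorem prep_A_mulVec_apply (t : ℕ) (v : (Prep t : KRep k).ι1 → k)
    (r : (Prep t : KRep k).ι2) :
    ((Prep t : KRep k).A *ᵥ v) r =
      if h : Fin.val (n := t) r < t - 1 then v (Fin.mk (n := t - 1) (Fin.val (n := t) r) h)
      else 0 := by
  revert v r
  show ∀ (v : Fin (t - 1) → k) (r : Fin t),
    ∑ c : Fin (t - 1), (if (r : ℕ) = c then 1 else 0) * v c =
      if h : (r : ℕ) < t - 1 then v ⟨r, h⟩ else 0
  intro v r
  simp only [ite_mul, one_mul, zero_mul]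
  split_ifs with h
  · rw [Fintype.sum_eq_single ⟨r, h⟩ fun c hc => if_neg fun hrc => hc (Fin.ext (Eq.symm hrc)),
      if_pos rfl]
  · exact Finset.sum_eq_zero fun c _ => if_neg fun _ => h (by omega)

theorem prep_B_mulVec_apply (t : ℕ) (v : (Prep t : KRep k).ι1 → k)
    (r : (Prep t : KRep k).ι2) :
    ((Prep t : KRep k).B *ᵥ v) r =
      if h : 0 < Fin.val (n := t) r then
        v (Fin.mk (n := t - 1) (Fin.val (n := t) r - 1) (by have := Fin.isLt (n := t) r; omega))
      else 0 := by
  revert v r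
  show ∀ (v : Fin (t - 1) → k) (r : Fin t),
    ∑ c : Fin (t - 1), (if (r : ℕ) = c + 1 then 1 else 0) * v c =
      if h : 0 < (r : ℕ) then v ⟨r - 1, by omega⟩ else 0
  intro v r
  simp only [ite_mul, one_mul, zero_mul]
  split_ifs with h
  · rw [Fintype.sum_eq_single ⟨r - 1, by omega⟩ fun c hc => if_neg fun hrc => hc (Fin.ext (by
      simp only; omega)), if_pos (by simp only; omega)]
  · exact Finset.sum_eq_zero fun c _ => if_neg (by omega)

/-- Along each diagonal the values only change sign. A diagonal starting below the main diagonal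
starts with a zero from `hzero`; every other one reaches the zero column `s = t - 1` before leaving
the rows `i < m`, because `t ≤ m`. -/
theorem eq_zero_of_diagonal_recurrence {G : Type*} [AddGroup G] {m t : ℕ} (htm : t ≤ m)
    (X : ℕ → ℕ → G) (hout : ∀ i s, ¬ (i < m ∧ s < t - 1) → X i s = 0)
    (hzero : ∀ i, i + 1 < m → 0 < t → X (i + 1) 0 = 0)
    (hstep : ∀ i s, i + 1 < m → s + 1 < t → X i s + X (i + 1) (s + 1) = 0) (i s : ℕ) :
    X i s = 0 := by
  have below : ∀ s i, s < i → X i s = 0 := by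
    intro s
    induction s with
    | zero =>
      intro i hi
      obtain ⟨j, rfl⟩ : ∃ j, i = j + 1 := ⟨i - 1, by omega⟩
      by_cases hj : j + 1 < m ∧ 0 < t
      · exact hzero j hj.1 hj.2
      · exact hout _ _ (by omega)
    | succ s ih =>
      intro i hi
      obtain ⟨j, rfl⟩ : ∃ j, i = j + 1 := ⟨i - 1, by omega⟩
      by_cases hj : j + 1 < m ∧ s + 1 < t
      · simpa [ih j (by omega)] using hstep j s hj.1 hj.2
      · exact hout _ _ (by omega)
  have above : ∀ d i s, t - 1 ≤ s + d → i + d < m → X i s = 0 := by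
    intro d
    induction d with
    | zero => exact fun i s hs _ => hout _ _ (by omega)
    | succ d ih =>
      intro i s hs hi
      by_cases hst : s < t - 1
      · simpa [ih (i + 1) (s + 1) (by omega) (by omega)] using hstep i s (by omega) (by omega)
      · exact hout _ _ (by omega)
  by_cases his : s < i
  · exact below s i his
  · by_cases hi : i < m
    · exact above (t - 1 - s) i s (by omega) (by omega)
    · exact hout _ _ (by omega)

theorem prepBlockMat_prep_mulVec_injective {t m : ℕ} (htm : t ≤ m) :
    Function.Injective (prepBlockMat (Prep t : KRep k) m).mulVec := by
  obtain _ | n := m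
  · exact Function.injective_of_subsingleton _
  suffices hker : ∀ x, prepBlockMat (Prep t : KRep k) (n + 1) *ᵥ x = 0 → x = 0 from
    LinearMap.ker_eq_bot.mp (ker_mulVecLin_eq_bot_iff.mpr hker)
  intro x hx
  let X : ℕ → ℕ → k := fun i s =>
    if h : i < n + 1 ∧ s < t - 1 then x (⟨i, h.1⟩, ⟨s, h.2⟩) else 0
  have hrow : ∀ (i : Fin n) (r : (Prep t : KRep k).ι2),
      (if 0 < Fin.val (n := t) r then X i (Fin.val (n := t) r - 1) else 0) +
        X (i + 1) (Fin.val (n := t) r) = 0 := by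
    rintro ⟨i, hi⟩ r
    have h :=
      (prepBlockMat_mulVec (Prep t) n x ⟨i, hi⟩ r).symm.trans (congrFun hx (⟨i, hi⟩, r))
    rw [prep_A_mulVec_apply, prep_B_mulVec_apply] at h
    have := Fin.isLt (n := t) r
    simp only [X]
    split_ifs at h ⊢ <;> first | omega | simpa using h
  have hX := eq_zero_of_diagonal_recurrence htm X (fun i s h => dif_neg h)
    (fun i hi ht => by simpa using hrow ⟨i, by omega⟩ (⟨0, ht⟩ : Fin t))
    (fun i s hi hs => by simpa using hrow ⟨i, by omega⟩ (⟨s + 1, hs⟩ : Fin t))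
  funext ⟨⟨i, hi⟩, ⟨s, hs⟩⟩
  rw [Pi.zero_apply, ← show X i s = x (⟨i, hi⟩, ⟨s, hs⟩) from dif_pos ⟨hi, hs⟩]
  exact hX i s

theorem rank_prepBlockMat_prep_comm (t m : ℕ) :
    (prepBlockMat (Prep t : KRep k) m).rank = (prepBlockMat (Prep m : KRep k) t).rank := by
  have htranspose : (prepBlockMat (Prep t : KRep k) m)ᵀ =
      (prepBlockMat (Prep m : KRep k) t).submatrix (Equiv.prodComm _ _) (Equiv.prodComm _ _) := by
    ext ⟨j, c⟩ ⟨i, r⟩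
    change prepBlockMat (Prep t : KRep k) m (i, r) (j, c) =
      prepBlockMat (Prep m : KRep k) t (c, j) (r, i)
    simp only [prepBlockMat, Prep]
    split_ifs <;> first | omega | rfl
  rw [← rank_transpose, htranspose]
  exact rank_submatrix _ _ _

theorem rank_prepBlockMat_prep {t m : ℕ} (ht : 1 ≤ t) (hm : 1 ≤ m) :
    (prepBlockMat (Prep t : KRep k) m).rank + max m t = m * t := by
  rcases le_total t m with h | h
  · rw [rank_eq_card_width_of_injective _ (prepBlockMat_prep_mulVec_injective h),
      Fintype.card_prod, Fintype.card_fin, card_prep_ι1, max_eq_left h, Nat.mul_sub_one]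
    have := Nat.le_mul_of_pos_right m ht
    omega
  · rw [rank_prepBlockMat_prep_comm, rank_eq_card_width_of_injective _
      (prepBlockMat_prep_mulVec_injective h), Fintype.card_prod, Fintype.card_fin, card_prep_ι1,
      max_eq_right h, Nat.mul_sub_one, Nat.mul_comm m t]
    have := Nat.le_mul_of_pos_right t hm
    omega

theorem KIso.kIso_prep_iff {W : KRep k} {t : ℕ} (h : KIso W (Prep t)) (n : ℕ) :
    KIso W (Prep n) ↔ t = n := by
  refine ⟨fun h' => ?_, fun htn => htn ▸ h⟩
  have := h.card_ι2_eq.symm.trans h'.card_ι2_eq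
  rwa [card_prep_ι2, card_prep_ι2] at this

theorem not_kIso_prep_of_card {W : KRep k} (hW : Fintype.card W.ι2 ≠ Fintype.card W.ι1 + 1)
    {n : ℕ} (hn : 1 ≤ n) : ¬ KIso W (Prep n) := fun h => by
  have h1 := h.card_ι1_eq
  have h2 := h.card_ι2_eq
  rw [card_prep_ι1] at h1
  rw [card_prep_ι2] at h2
  omega

theorem ite_kIso_prep_eq_of_kIso_prep {W : KRep k} {t : ℕ} (ht : 1 ≤ t) (h : KIso W (Prep t))
    {n : ℕ} (hn : 2 ≤ n) :
    (if KIso W (Prep n) then 1 else 0 : ℤ) = 2 * ((prepBlockMat W n).rank : ℤ)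
      - (prepBlockMat W (n - 1)).rank - (prepBlockMat W (n + 1)).rank := by
  have r₁ := rank_prepBlockMat_prep (k := k) ht (m := n - 1) (by omega)
  have r₂ := rank_prepBlockMat_prep (k := k) ht (m := n) (by omega)
  have r₃ := rank_prepBlockMat_prep (k := k) ht (m := n + 1) (by omega)
  have hpred : (n - 1) * t + t = n * t := by
    rw [← Nat.succ_mul, Nat.succ_eq_add_one, Nat.sub_add_cancel (by omega)]
  have hsucc : (n + 1) * t = n * t + t := Nat.succ_mul n t
  simp only [h.rank_prepBlockMat_eq, h.kIso_prep_iff]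
  split_ifs <;> omega

theorem ite_kIso_prep_eq_of_rank_eq_mul {W : KRep k} {c : ℕ}
    (hW : Fintype.card W.ι2 ≠ Fintype.card W.ι1 + 1)
    (hrank : ∀ m, (prepBlockMat W m).rank = (m - 1) * c) {n : ℕ} (hn : 2 ≤ n) :
    (if KIso W (Prep n) then 1 else 0 : ℤ) = 2 * ((prepBlockMat W n).rank : ℤ)
      - (prepBlockMat W (n - 1)).rank - (prepBlockMat W (n + 1)).rank := by
  have hpred : ∀ {m}, 1 ≤ m → (m - 1) * c + c = m * c := fun hm => by
    rw [← Nat.succ_mul, Nat.succ_eq_add_one, Nat.sub_add_cancel hm]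
  have h₁ := hpred (m := n) (by omega)
  have h₂ := hpred (m := n - 1) (by omega)
  rw [if_neg (not_kIso_prep_of_card hW (by omega)), hrank, hrank, hrank, Nat.add_sub_cancel]
  omega

theorem IsKroneckerIndec.ite_kIso_prep_eq {W : KRep k} (hW : IsKroneckerIndec W) {n : ℕ}
    (hn : 2 ≤ n) :
    (if KIso W (Prep n) then 1 else 0 : ℤ) = 2 * ((prepBlockMat W n).rank : ℤ)
      - (prepBlockMat W (n - 1)).rank - (prepBlockMat W (n + 1)).rank := by
  rcases hW with ⟨t, ht, h⟩ | ⟨t, ht, h⟩ | ⟨t, -, lam, h⟩ | ⟨t, -, h⟩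
  · exact ite_kIso_prep_eq_of_kIso_prep ht h hn
  · refine ite_kIso_prep_eq_of_rank_eq_mul ?_
      (fun m => (h.rank_prepBlockMat_eq m).trans (rank_prepBlockMat_irep t m)) hn
    rw [h.card_ι1_eq, h.card_ι2_eq, card_irep_ι1, card_irep_ι2]
    omega
  · refine ite_kIso_prep_eq_of_rank_eq_mul ?_
      (fun m => (h.rank_prepBlockMat_eq m).trans (rank_prepBlockMat_rreg t m lam)) hn
    rw [h.card_ι1_eq, h.card_ι2_eq, card_rreg_ι1, card_rreg_ι2]
    omega
  · refine ite_kIso_prep_eq_of_rank_eq_mul ?_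
      (fun m => (h.rank_prepBlockMat_eq m).trans (rank_prepBlockMat_rinf t m)) hn
    rw [h.card_ι1_eq, h.card_ι2_eq, card_rinf_ι1, card_rinf_ι2]
    omega

theorem kronecker_preprojective_multiplicity_general (M : KRep k)
    (m : ℕ) (V : Fin m → KRep k) (hV : ∀ j, IsKroneckerIndec (V j))
    (hiso : KIso M (KSum V)) (n : ℕ) (hn : 2 ≤ n) :
    ((Finset.univ.filter (fun j => KIso (V j) (Prep (k := k) n))).card : ℤ)
      = 2 * ((prepBlockMat M n).rank : ℤ)
        - ((prepBlockMat M (n - 1)).rank : ℤ)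
        - ((prepBlockMat M (n + 1)).rank : ℤ) := by
  have hrank (p : ℕ) :
      ((prepBlockMat M p).rank : ℤ) = ∑ j, ((prepBlockMat (V j) p).rank : ℤ) := by
    rw [hiso.rank_prepBlockMat_eq, rank_prepBlockMat_kSum, Nat.cast_sum]
  rw [hrank, hrank, hrank, Finset.mul_sum, ← Finset.sum_sub_distrib, ← Finset.sum_sub_distrib,
    Finset.card_filter, Nat.cast_sum]
  refine Finset.sum_congr rfl fun j _ => ?_
  push_cast
  exact (hV j).ite_kIso_prep_eq hn

/-- if the Kronecker representation `M` decomposes as `⊕_j V j` with each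
`V j` an indecomposable Kronecker representation, then for `n ≥ 2` the multiplicity of the
preprojective indecomposable `P_n` equals `2 p_n(M) - p_{n-1}(M) - p_{n+1}(M)`, where
`p_m(M) = rank P_m(M)`. -/
theorem kronecker_preprojective_multiplicity [IsAlgClosed k] (M : KRep k)
    (m : ℕ) (V : Fin m → KRep k) (hV : ∀ j, IsKroneckerIndec (V j))
    (hiso : KIso M (KSum V)) (n : ℕ) (hn : 2 ≤ n) :
    ((Finset.univ.filter (fun j => KIso (V j) (Prep (k := k) n))).card : ℤ)
      = 2 * ((prepBlockMat M n).rank : ℤ)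
        - ((prepBlockMat M (n - 1)).rank : ℤ)
        - ((prepBlockMat M (n + 1)).rank : ℤ) :=
  kronecker_preprojective_multiplicity_general M m V hV hiso n hn
end

section
/- Let A be the Kronecker algebra over an algebraically closed field k, M a finite-dimensional A-module with dimension vector (d_1,d_2), and write M = P_M ⊕ R_M ⊕ I_M as the direct sums of its preprojective, regular, and preinjective parts. Then Rej_M(P_{d_2}) = R_M ⊕ I_M, where Rej_M(P_{d_2}) = ∩{Ker f : f ∈ Hom_A(M, P_{d_2})} is the reject of P_{d_2} in M. -/
variable {k : Type} [Field k]

/-- Binary direct sum of Kronecker representations. -/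
@[reducible] def KDsum (M N : KRep k) : KRep k where
  ι1 := M.ι1 ⊕ N.ι1
  ι2 := M.ι2 ⊕ N.ι2
  A := Matrix.fromBlocks M.A 0 0 N.A
  B := Matrix.fromBlocks M.B 0 0 N.B

/-- `(X, Y)` is a morphism of Kronecker representations `M → N`. -/
def KHom (M N : KRep k) (X : Matrix N.ι1 M.ι1 k) (Y : Matrix N.ι2 M.ι2 k) : Prop :=
  N.A * X = Y * M.A ∧ N.B * X = Y * M.B

/-- `P` is a direct sum of preprojective indecomposables. -/
def IsPreprojectiveSum (P : KRep k) : Prop :=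
  ∃ (m : ℕ) (nn : Fin m → ℕ), (∀ j, 1 ≤ nn j) ∧ KIso P (KSum fun j => Prep (nn j))

/-- `I` is a direct sum of preinjective indecomposables. -/
def IsPreinjectiveSum (I : KRep k) : Prop :=
  ∃ (m : ℕ) (nn : Fin m → ℕ), (∀ j, 1 ≤ nn j) ∧ KIso I (KSum fun j => Irep (nn j))

/-- `R` is a direct sum of regular indecomposables. -/
def IsRegularSum (R : KRep k) : Prop :=
  ∃ (m : ℕ) (V : Fin m → KRep k),
    (∀ j, ∃ n, 1 ≤ n ∧ ((∃ lam : k, KIso (V j) (Rreg n lam)) ∨ KIso (V j) (Rinf n))) ∧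
    KIso R (KSum V)

/-- The matrix of the canonical inclusion `k^β → k^{α ⊕ β}`. -/
def inrMat (α β : Type) [DecidableEq α] [DecidableEq β] : Matrix (α ⊕ β) β k :=
  fun a b => if a = Sum.inr b then 1 else 0

open Classical

/-!
A morphism from a regular or preinjective indecomposable to `P_N` vanishes: read row by
row, the intertwining equations become a recursion on the rows (through a Jordan cell, or
through the injective structure map of `I_n`) that starts from a zero row. Hence every
`f : M → P_{d₂}` kills `R_M ⊕ I_M`. Conversely, every `P_n` with `n ≤ d₂` embeds into
`P_{d₂}`, so the morphisms `P_M → P_{d₂}` separate the points of `P_M`; composed with the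
projection `M → P_M` they show that the reject meets `P_M` trivially.
-/

open Matrix

theorem Fin.sum_ite_val_eq {M : Type*} [AddCommMonoid M] {m : ℕ} (f : Fin m → M) (a : ℕ) :
    ∑ s : Fin m, (if a = s then f s else 0) = if h : a < m then f ⟨a, h⟩ else 0 := by
  split_ifs with h
  · rw [Finset.sum_eq_single ⟨a, h⟩] <;> simp_all [Fin.ext_iff, eq_comm]
  · exact Finset.sum_eq_zero fun s _ => if_neg fun hs : a = s => h (hs ▸ s.isLt)

theorem inrMat_eq_fromRows (α β : Type) [DecidableEq α] [DecidableEq β] :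
    (inrMat α β : Matrix (α ⊕ β) β k) = fromRows 0 1 := by
  ext (a | b) c <;> simp [inrMat, one_apply]

namespace Matrix

theorem card_le_card_of_mul_eq_one {R : Type*} [CommRing R] [StrongRankCondition R]
    {m n : Type*} [Fintype m] [Fintype n] [DecidableEq m] {A : Matrix m n R} {B : Matrix n m R}
    (h : A * B = 1) : Fintype.card m ≤ Fintype.card n := by
  simpa [h] using (rank_mul_le_left A B).trans (rank_le_card_width A)

theorem mul_eq_mul_of_inverses {ι₁ ι₂ κ₁ κ₂ : Type} [Fintype ι₁] [Fintype ι₂] [Fintype κ₁]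
    [Fintype κ₂] [DecidableEq ι₂] [DecidableEq κ₁]
    {A : Matrix ι₂ ι₁ k} {B : Matrix κ₂ κ₁ k} {X : Matrix κ₁ ι₁ k} {Y : Matrix κ₂ ι₂ k}
    {X' : Matrix ι₁ κ₁ k} {Y' : Matrix ι₂ κ₂ k} (h : B * X = Y * A) (hX : X * X' = 1)
    (hY : Y' * Y = 1) : A * X' = Y' * B := by
  calc A * X' = Y' * (Y * A) * X' := by rw [← Matrix.mul_assoc, hY, Matrix.one_mul]
    _ = Y' * B := by rw [← h, Matrix.mul_assoc, Matrix.mul_assoc, hX, Matrix.mul_one]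

theorem eq_zero_of_mul_fromRows_eq_zero {l α β : Type} [Fintype α] [Fintype β]
    [DecidableEq α] [DecidableEq β] {X : Matrix l (α ⊕ β) k}
    (hl : X * (fromRows 1 0 : Matrix (α ⊕ β) α k) = 0)
    (hr : X * (fromRows 0 1 : Matrix (α ⊕ β) β k) = 0) : X = 0 := by
  rw [← fromCols_toCols X] at hl hr ⊢
  simp only [fromCols_mul_fromRows, Matrix.mul_one, Matrix.mul_zero, add_zero, zero_add] at hl hr
  rw [hl, hr, fromCols_zero]

theorem iInf_ker_eq_range_mul_inrMat {ι Z V U W : Type} [Fintype V] [DecidableEq V]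
    [Fintype U] [Fintype W] [DecidableEq U] [DecidableEq W] (f : ι → Matrix Z V k)
    {X : Matrix V (U ⊕ W) k} {X' : Matrix (U ⊕ W) V k} (hX : X * X' = 1)
    (hW : ∀ i, f i * X * (fromRows 0 1 : Matrix (U ⊕ W) W k) = 0)
    (hU : ∀ u, (∀ i, (f i * X * (fromRows 1 0 : Matrix (U ⊕ W) U k)) *ᵥ u = 0) → u = 0) :
    ⨅ i, LinearMap.ker (f i).mulVecLin =
      LinearMap.range (X * (inrMat U W : Matrix (U ⊕ W) W k)).mulVecLin := by
  rw [inrMat_eq_fromRows]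
  refine le_antisymm (fun x hx => ?_) ?_
  · rw [Submodule.mem_iInf] at hx
    set v := X' *ᵥ x
    have hsplit : v = fromRows 1 0 *ᵥ (v ∘ Sum.inl) + fromRows 0 1 *ᵥ (v ∘ Sum.inr) := by
      ext (a | b) <;> simp
    have hx' : x = X *ᵥ v := by rw [mulVec_mulVec, hX, one_mulVec]
    have hvl : v ∘ Sum.inl = 0 := hU _ fun i => by
      have hxi := hx i
      rw [LinearMap.mem_ker, mulVecLin_apply, hx', hsplit] at hxi
      simpa only [mulVec_add, mulVec_mulVec, ← Matrix.mul_assoc, hW, zero_mulVec, add_zero]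
        using hxi
    refine ⟨v ∘ Sum.inr, ?_⟩
    rw [mulVecLin_apply, ← mulVec_mulVec, hx', hsplit, hvl]
    simp
  · rintro _ ⟨w, rfl⟩
    refine Submodule.mem_iInf _ |>.2 fun i => ?_
    rw [LinearMap.mem_ker, mulVecLin_apply, mulVecLin_apply, mulVec_mulVec, ← Matrix.mul_assoc,
      hW, zero_mulVec]

variable (k) in
def sigmaIncl {σ : Type} [DecidableEq σ] (ι : σ → Type) [∀ i, DecidableEq (ι i)] (j : σ) :
    Matrix (Σ i, ι i) (ι j) k :=
  (1 : Matrix (Σ i, ι i) (Σ i, ι i) k).submatrix id (Sigma.mk j)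

variable (k) in
def sigmaProj {σ : Type} [DecidableEq σ] (ι : σ → Type) [∀ i, DecidableEq (ι i)] (j : σ) :
    Matrix (ι j) (Σ i, ι i) k :=
  (1 : Matrix (Σ i, ι i) (Σ i, ι i) k).submatrix (Sigma.mk j) id

section Sigma

variable {σ : Type} [Fintype σ] [DecidableEq σ] {ι κ : σ → Type} [∀ i, Fintype (ι i)]
  [∀ i, DecidableEq (ι i)] [∀ i, Fintype (κ i)] [∀ i, DecidableEq (κ i)]

theorem mul_sigmaIncl {l : Type} (X : Matrix l (Σ i, ι i) k) (j : σ) :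
    X * sigmaIncl k ι j = X.submatrix id (Sigma.mk j) := by
  ext a b
  simp [sigmaIncl, mul_apply, one_apply]

theorem sigmaProj_mulVec (v : (Σ i, ι i) → k) (j : σ) :
    sigmaProj k ι j *ᵥ v = v ∘ Sigma.mk j := by
  ext b
  simp [sigmaProj, mulVec, dotProduct, one_apply]

theorem eq_zero_of_mul_sigmaIncl_eq_zero {l : Type} {X : Matrix l (Σ i, ι i) k}
    (h : ∀ j, X * sigmaIncl k ι j = 0) : X = 0 := by
  ext a ⟨j, b⟩
  simpa [mul_sigmaIncl] using congrFun (congrFun (h j) a) b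

theorem eq_zero_of_sigmaProj_mulVec_eq_zero {u : (Σ i, ι i) → k}
    (h : ∀ j, sigmaProj k ι j *ᵥ u = 0) : u = 0 := by
  ext ⟨j, b⟩
  simpa [sigmaProj_mulVec] using congrFun (h j) b

theorem blockDiagonal'_mul_sigmaIncl (d : ∀ i, Matrix (κ i) (ι i) k) (j : σ) :
    blockDiagonal' d * sigmaIncl k ι j = sigmaIncl k κ j * d j := by
  rw [mul_sigmaIncl]
  ext ⟨j', a⟩ b
  rcases eq_or_ne j' j with rfl | hne
  · simp [sigmaIncl, mul_apply, one_apply]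
  · simp [sigmaIncl, mul_apply, hne, blockDiagonal'_apply_ne _ _ _ hne]

theorem sigmaProj_mul_blockDiagonal' (d : ∀ i, Matrix (κ i) (ι i) k) (j : σ) :
    sigmaProj k κ j * blockDiagonal' d = d j * sigmaProj k ι j := by
  ext b ⟨j', a⟩
  rcases eq_or_ne j j' with rfl | hne
  · simp [sigmaProj, mul_apply, one_apply]
  · simp [sigmaProj, mul_apply, one_apply, hne, blockDiagonal'_apply_ne _ _ _ hne]

end Sigma

def natRow {α ι : Type*} [Zero α] {m : ℕ} (X : Matrix (Fin m) ι α) (r : ℕ) : ι → α :=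
  if h : r < m then X ⟨r, h⟩ else 0

section NatRow

variable {α ι : Type*} [Zero α] {m : ℕ} (X : Matrix (Fin m) ι α)

theorem natRow_of_lt {r : ℕ} (h : r < m) : X.natRow r = X ⟨r, h⟩ := dif_pos h

theorem natRow_of_le {r : ℕ} (h : m ≤ r) : X.natRow r = 0 := dif_neg (not_lt.2 h)

theorem natRow_apply (r : ℕ) (c : ι) :
    X.natRow r c = if h : r < m then X ⟨r, h⟩ c else 0 := by
  unfold natRow
  split_ifs <;> rfl

theorem eq_zero_of_natRow_eq_zero (h : ∀ r, X.natRow r = 0) : X = 0 := by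
  ext i j
  simpa [natRow_of_lt X i.isLt] using congrFun (h i) j

end NatRow

end Matrix

-- By definition `Prep N` is `(embMat k (N - 1) N, shiftMat k (N - 1) N)`.
variable (k) in
def embMat (m n : ℕ) : Matrix (Fin n) (Fin m) k :=
  of fun i j => if (i : ℕ) = j then 1 else 0

variable (k) in
def shiftMat (m n : ℕ) : Matrix (Fin n) (Fin m) k :=
  of fun i j => if (i : ℕ) = j + 1 then 1 else 0

section EmbShift

variable {a b c : ℕ} {ι : Type}

theorem embMat_mul_apply (X : Matrix (Fin a) ι k) (r : Fin b) :
    (embMat k a b * X) r = X.natRow r := by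
  ext j
  simp [embMat, mul_apply, Fin.sum_ite_val_eq, natRow_apply]

theorem shiftMat_mul_apply_zero (X : Matrix (Fin a) ι k) (hb : 0 < b) :
    (shiftMat k a b * X) ⟨0, hb⟩ = 0 := by
  ext j
  simp [shiftMat, mul_apply]

theorem shiftMat_mul_apply_succ (X : Matrix (Fin a) ι k) {r : ℕ} (hr : r + 1 < b) :
    (shiftMat k a b * X) ⟨r + 1, hr⟩ = X.natRow r := by
  ext j
  simp [shiftMat, mul_apply, Fin.sum_ite_val_eq, natRow_apply]

theorem embMat_mul_embMat (h : a ≤ b) : embMat k b c * embMat k a b = embMat k a c := by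
  ext i j
  rw [embMat_mul_apply, natRow_apply]
  split_ifs
  · rfl
  · simp [embMat]
    omega

theorem shiftMat_mul_embMat (h : a ≤ b) : shiftMat k b c * embMat k a b = shiftMat k a c := by
  ext ⟨_ | i, hi⟩ j
  · rw [shiftMat_mul_apply_zero]
    simp [shiftMat]
  · rw [shiftMat_mul_apply_succ, natRow_apply]
    split_ifs
    · simp [embMat, shiftMat]
    · simp [shiftMat]
      omega

theorem embMat_mul_shiftMat (h : a ≤ b - 1) :
    embMat k b c * shiftMat k a b = shiftMat k a c := by
  ext i j
  rw [embMat_mul_apply, natRow_apply]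
  split_ifs
  · rfl
  · simp [shiftMat]
    omega

theorem eq_zero_of_embMat_mulVec_eq_zero (h : a ≤ b) {v : Fin a → k}
    (hv : embMat k a b *ᵥ v = 0) : v = 0 := by
  ext j
  simpa [embMat, mulVec, dotProduct, Fin.sum_ite_val_eq, j.isLt] using congrFun hv ⟨j, by omega⟩

end EmbShift

section Morphisms

theorem KHom.comp {M N L : KRep k} {X : Matrix N.ι1 M.ι1 k} {Y : Matrix N.ι2 M.ι2 k}
    {X' : Matrix L.ι1 N.ι1 k} {Y' : Matrix L.ι2 N.ι2 k}
    (h : KHom M N X Y) (h' : KHom N L X' Y') : KHom M L (X' * X) (Y' * Y) :=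
  ⟨by rw [← Matrix.mul_assoc, h'.1, Matrix.mul_assoc, h.1, Matrix.mul_assoc],
    by rw [← Matrix.mul_assoc, h'.2, Matrix.mul_assoc, h.2, Matrix.mul_assoc]⟩

theorem KHom.inv {M N : KRep k} {X : Matrix N.ι1 M.ι1 k} {Y : Matrix N.ι2 M.ι2 k}
    {X' : Matrix M.ι1 N.ι1 k} {Y' : Matrix M.ι2 N.ι2 k}
    (h : KHom M N X Y) (hX : X * X' = 1) (hY : Y' * Y = 1) : KHom N M X' Y' :=
  ⟨mul_eq_mul_of_inverses h.1 hX hY, mul_eq_mul_of_inverses h.2 hX hY⟩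

theorem kHom_inl (P Q : KRep k) : KHom P (KDsum P Q) (fromRows 1 0) (fromRows 1 0) := by
  constructor <;> simp [fromBlocks_mul_fromRows]

theorem kHom_inr (P Q : KRep k) : KHom Q (KDsum P Q) (fromRows 0 1) (fromRows 0 1) := by
  constructor <;> simp [fromBlocks_mul_fromRows]

theorem kHom_fst (P Q : KRep k) : KHom (KDsum P Q) P (fromCols 1 0) (fromCols 1 0) := by
  constructor <;> simp [fromCols_mul_fromBlocks]

theorem kHom_sigmaIncl {m : ℕ} (V : Fin m → KRep k) (j : Fin m) :
    KHom (V j) (KSum V) (sigmaIncl k (fun i => (V i).ι1) j)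
      (sigmaIncl k (fun i => (V i).ι2) j) :=
  ⟨blockDiagonal'_mul_sigmaIncl (fun i => (V i).A) j,
    blockDiagonal'_mul_sigmaIncl (fun i => (V i).B) j⟩

theorem kHom_sigmaProj {m : ℕ} (V : Fin m → KRep k) (j : Fin m) :
    KHom (KSum V) (V j) (sigmaProj k (fun i => (V i).ι1) j)
      (sigmaProj k (fun i => (V i).ι2) j) :=
  ⟨(sigmaProj_mul_blockDiagonal' (fun i => (V i).A) j).symm,
    (sigmaProj_mul_blockDiagonal' (fun i => (V i).B) j).symm⟩

theorem kHom_prep_embMat {n N : ℕ} (h : n ≤ N) :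
    KHom (Prep n) (Prep N) (embMat k (n - 1) (N - 1)) (embMat k n N) :=
  ⟨(embMat_mul_embMat (by omega)).trans (embMat_mul_embMat (by omega)).symm,
    (shiftMat_mul_embMat (by omega)).trans (embMat_mul_shiftMat le_rfl).symm⟩

theorem KHom.natRow_prep {W : KRep k} {N : ℕ} {X : Matrix (Fin (N - 1)) W.ι1 k}
    {Y : Matrix (Fin N) W.ι2 k} (h : KHom W (Prep N) X Y) :
    (∀ r, X.natRow r = Y.natRow r ᵥ* W.A) ∧ Y.natRow 0 ᵥ* W.B = 0 ∧
      ∀ r, X.natRow r = Y.natRow (r + 1) ᵥ* W.B := by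
  have hA : embMat k (N - 1) N * X = Y * W.A := h.1
  have hB : shiftMat k (N - 1) N * X = Y * W.B := h.2
  refine ⟨fun r => ?_, ?_, fun r => ?_⟩
  · by_cases hr : r < N
    · rw [Y.natRow_of_lt hr, ← mul_apply_eq_vecMul, ← hA, embMat_mul_apply]
    · rw [X.natRow_of_le (by omega), Y.natRow_of_le (by omega), zero_vecMul]
  · rcases Nat.eq_zero_or_pos N with rfl | hN
    · rw [Y.natRow_of_le le_rfl, zero_vecMul]
    · rw [Y.natRow_of_lt hN, ← mul_apply_eq_vecMul, ← hB, shiftMat_mul_apply_zero]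
  · by_cases hr : r + 1 < N
    · rw [Y.natRow_of_lt hr, ← mul_apply_eq_vecMul, ← hB, shiftMat_mul_apply_succ]
    · rw [X.natRow_of_le (by omega), Y.natRow_of_le (by omega), zero_vecMul]

end Morphisms

def HomVanishes (Q L : KRep k) : Prop :=
  ∀ X Y, KHom Q L X Y → X = 0 ∧ Y = 0

section HomVanishes

theorem HomVanishes.of_kIso {Q Q' L : KRep k} (h : KIso Q Q') (h' : HomVanishes Q' L) :
    HomVanishes Q L := by
  obtain ⟨S, T, S', T', hSS', hS'S, -, hT'T, hA, hB⟩ := h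
  intro X Y hXY
  obtain ⟨hX, hY⟩ := h' _ _ ((KHom.inv ⟨hA.symm, hB.symm⟩ hSS' hT'T).comp hXY)
  constructor
  · rw [← Matrix.mul_one X, ← hS'S, ← Matrix.mul_assoc, hX, Matrix.zero_mul]
  · rw [← Matrix.mul_one Y, ← hT'T, ← Matrix.mul_assoc, hY, Matrix.zero_mul]

theorem homVanishes_kDsum {P Q L : KRep k} (hP : HomVanishes P L) (hQ : HomVanishes Q L) :
    HomVanishes (KDsum P Q) L := by
  intro X Y h
  obtain ⟨hXl, hYl⟩ := hP _ _ ((kHom_inl P Q).comp h)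
  obtain ⟨hXr, hYr⟩ := hQ _ _ ((kHom_inr P Q).comp h)
  exact ⟨eq_zero_of_mul_fromRows_eq_zero hXl hXr, eq_zero_of_mul_fromRows_eq_zero hYl hYr⟩

theorem homVanishes_kSum {m : ℕ} {V : Fin m → KRep k} {L : KRep k}
    (h : ∀ j, HomVanishes (V j) L) : HomVanishes (KSum V) L := by
  intro X Y hXY
  have hj := fun j => h j _ _ ((kHom_sigmaIncl V j).comp hXY)
  exact ⟨eq_zero_of_mul_sigmaIncl_eq_zero fun j => (hj j).1,
    eq_zero_of_mul_sigmaIncl_eq_zero fun j => (hj j).2⟩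

theorem homVanishes_rreg_prep (n N : ℕ) (lam : k) : HomVanishes (Rreg n lam) (Prep N) := by
  intro (X : Matrix (Fin (N - 1)) (Fin n) k) (Y : Matrix (Fin N) (Fin n) k) h
  obtain ⟨hA, -, hB⟩ := h.natRow_prep
  have hXY : ∀ r, X.natRow r = Y.natRow r := fun r => (hA r).trans (vecMul_one _)
  have hJ : ∀ r, X.natRow r = Y.natRow (r + 1) ᵥ* jordanCell n lam := hB
  -- descending induction, starting from the rows past the end of `X`
  have hX : ∀ d r, N - 1 ≤ r + d → X.natRow r = 0 := by
    intro d
    induction d with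
    | zero => exact fun r hr => X.natRow_of_le (by omega)
    | succ d ih =>
      intro r hr
      rw [hJ r, ← hXY, ih (r + 1) (by omega), zero_vecMul]
  have hX' : ∀ r, X.natRow r = 0 := fun r => hX (N - 1) r (by omega)
  exact ⟨X.eq_zero_of_natRow_eq_zero hX', Y.eq_zero_of_natRow_eq_zero fun r => hXY r ▸ hX' r⟩

theorem homVanishes_rinf_prep (n N : ℕ) : HomVanishes (Rinf (k := k) n) (Prep N) := by
  intro (X : Matrix (Fin (N - 1)) (Fin n) k) (Y : Matrix (Fin N) (Fin n) k) h
  obtain ⟨hA, hB0, hB⟩ := h.natRow_prep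
  have hJ : ∀ r, X.natRow r = Y.natRow r ᵥ* jordanCell n 0 := hA
  have hYX : ∀ r, Y.natRow (r + 1) = X.natRow r := fun r => ((hB r).trans (vecMul_one _)).symm
  have hY : ∀ r, Y.natRow r = 0 := by
    intro r
    induction r with
    | zero => exact (vecMul_one _).symm.trans hB0
    | succ r ih => rw [hYX, hJ, ih, zero_vecMul]
  exact ⟨X.eq_zero_of_natRow_eq_zero fun r => hYX r ▸ hY (r + 1),
    Y.eq_zero_of_natRow_eq_zero hY⟩

theorem eq_zero_of_vecMul_irep_B_eq_zero {n : ℕ} {v : Fin (n - 1) → k}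
    (hv : v ᵥ* (Irep n).B = 0) : v = 0 := by
  ext j
  have hj : (v ᵥ* (Irep n).B) ⟨j + 1, by omega⟩ = 0 := congrFun hv _
  simpa [vecMul, dotProduct, Irep, Fin.val_inj] using hj

theorem homVanishes_irep_prep (n N : ℕ) : HomVanishes (Irep (k := k) n) (Prep N) := by
  intro (X : Matrix (Fin (N - 1)) (Fin n) k) (Y : Matrix (Fin N) (Fin (n - 1)) k) h
  obtain ⟨hA, hB0, hB⟩ := h.natRow_prep
  have hA' : ∀ r, X.natRow r = Y.natRow r ᵥ* (Irep n).A := hA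
  have hB' : ∀ r, X.natRow r = Y.natRow (r + 1) ᵥ* (Irep n).B := hB
  have hY : ∀ r, Y.natRow r = 0 := by
    intro r
    induction r with
    | zero => exact eq_zero_of_vecMul_irep_B_eq_zero hB0
    | succ r ih =>
      refine eq_zero_of_vecMul_irep_B_eq_zero ?_
      rw [← hB', hA', ih]
      exact zero_vecMul _
  refine ⟨X.eq_zero_of_natRow_eq_zero fun r => ?_, Y.eq_zero_of_natRow_eq_zero hY⟩
  rw [hA', hY]
  exact zero_vecMul _

theorem IsRegularSum.homVanishes_prep {R : KRep k} (hR : IsRegularSum R) (N : ℕ) :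
    HomVanishes R (Prep N) := by
  obtain ⟨m, V, hV, hiso⟩ := hR
  refine .of_kIso hiso (homVanishes_kSum fun j => ?_)
  obtain ⟨n, -, ⟨lam, hj⟩ | hj⟩ := hV j
  · exact .of_kIso hj (homVanishes_rreg_prep n N lam)
  · exact .of_kIso hj (homVanishes_rinf_prep n N)

theorem IsPreinjectiveSum.homVanishes_prep {I : KRep k} (hI : IsPreinjectiveSum I) (N : ℕ) :
    HomVanishes I (Prep N) := by
  obtain ⟨m, nn, -, hiso⟩ := hI
  exact .of_kIso hiso (homVanishes_kSum fun j => homVanishes_irep_prep (nn j) N)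

end HomVanishes

-- Equivalently, the reject of `L` in `P` vanishes.
def IsCogeneratedBy (P L : KRep k) : Prop :=
  (∀ u : P.ι1 → k, (∀ X Y, KHom P L X Y → X *ᵥ u = 0) → u = 0) ∧
    ∀ v : P.ι2 → k, (∀ X Y, KHom P L X Y → Y *ᵥ v = 0) → v = 0

section IsCogeneratedBy

theorem IsCogeneratedBy.of_kIso {P P' L : KRep k} (h : KIso P P') (h' : IsCogeneratedBy P' L) :
    IsCogeneratedBy P L := by
  obtain ⟨S, T, S', T', -, hS'S, -, hT'T, hA, hB⟩ := h
  have hST : KHom P P' S T := ⟨hA.symm, hB.symm⟩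
  refine ⟨fun u hu => ?_, fun v hv => ?_⟩
  · have hSu : S *ᵥ u = 0 := h'.1 _ fun X Y hXY =>
      (mulVec_mulVec _ _ _).trans (hu _ _ (hST.comp hXY))
    rw [← one_mulVec u, ← hS'S, ← mulVec_mulVec, hSu, mulVec_zero]
  · have hTv : T *ᵥ v = 0 := h'.2 _ fun X Y hXY =>
      (mulVec_mulVec _ _ _).trans (hv _ _ (hST.comp hXY))
    rw [← one_mulVec v, ← hT'T, ← mulVec_mulVec, hTv, mulVec_zero]

theorem isCogeneratedBy_kSum {m : ℕ} {V : Fin m → KRep k} {L : KRep k}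
    (h : ∀ j, IsCogeneratedBy (V j) L) : IsCogeneratedBy (KSum V) L := by
  refine ⟨fun u hu => ?_, fun v hv => ?_⟩
  · exact eq_zero_of_sigmaProj_mulVec_eq_zero fun j => (h j).1 _ fun X Y hXY =>
      (mulVec_mulVec _ _ _).trans (hu _ _ ((kHom_sigmaProj V j).comp hXY))
  · exact eq_zero_of_sigmaProj_mulVec_eq_zero fun j => (h j).2 _ fun X Y hXY =>
      (mulVec_mulVec _ _ _).trans (hv _ _ ((kHom_sigmaProj V j).comp hXY))

theorem prep_isCogeneratedBy_prep {n N : ℕ} (h : n ≤ N) :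
    IsCogeneratedBy (Prep (k := k) n) (Prep N) :=
  ⟨fun _ hu => eq_zero_of_embMat_mulVec_eq_zero (by omega) (hu _ _ (kHom_prep_embMat h)),
    fun _ hv => eq_zero_of_embMat_mulVec_eq_zero h (hv _ _ (kHom_prep_embMat h))⟩

theorem IsPreprojectiveSum.isCogeneratedBy_prep {P : KRep k} (hP : IsPreprojectiveSum P)
    {N : ℕ} (hN : Fintype.card P.ι2 ≤ N) : IsCogeneratedBy P (Prep N) := by
  obtain ⟨m, nn, -, hiso⟩ := hP
  refine .of_kIso hiso (isCogeneratedBy_kSum fun j => prep_isCogeneratedBy_prep ?_)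
  obtain ⟨-, T, -, T', -, -, hTT', -⟩ := hiso
  calc nn j = Fintype.card (Fin (nn j)) := (Fintype.card_fin _).symm
    _ ≤ Fintype.card (KSum fun i => Prep (k := k) (nn i)).ι2 :=
      Fintype.card_le_of_injective _ (@sigma_mk_injective _ (fun i => Fin (nn i)) j)
    _ ≤ Fintype.card P.ι2 := card_le_card_of_mul_eq_one hTT'
    _ ≤ N := hN

end IsCogeneratedBy

theorem iInf_ker_eq_range_inr_of_kHom_kDsum {M P Q L : KRep k} (hP : IsCogeneratedBy P L)
    (hQ : HomVanishes Q L) {X1 : Matrix M.ι1 (KDsum P Q).ι1 k}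
    {X2 : Matrix M.ι2 (KDsum P Q).ι2 k} {X1' : Matrix (KDsum P Q).ι1 M.ι1 k}
    {X2' : Matrix (KDsum P Q).ι2 M.ι2 k}
    (hX1 : X1 * X1' = 1) (hX1' : X1' * X1 = 1) (hX2 : X2 * X2' = 1) (hX2' : X2' * X2 = 1)
    (hmor : KHom (KDsum P Q) M X1 X2) :
    (⨅ f : {p : Matrix L.ι1 M.ι1 k × Matrix L.ι2 M.ι2 k // KHom M L p.1 p.2},
      LinearMap.ker f.1.1.mulVecLin) =
        LinearMap.range (X1 * (inrMat P.ι1 Q.ι1 : Matrix (KDsum P Q).ι1 Q.ι1 k)).mulVecLin ∧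
    (⨅ f : {p : Matrix L.ι1 M.ι1 k × Matrix L.ι2 M.ι2 k // KHom M L p.1 p.2},
      LinearMap.ker f.1.2.mulVecLin) =
        LinearMap.range (X2 * (inrMat P.ι2 Q.ι2 : Matrix (KDsum P Q).ι2 Q.ι2 k)).mulVecLin := by
  have hkill := fun f : {p : Matrix L.ι1 M.ι1 k × Matrix L.ι2 M.ι2 k // KHom M L p.1 p.2} =>
    hQ _ _ (((kHom_inr P Q).comp hmor).comp f.2)
  have hproj := fun (g1 : Matrix L.ι1 P.ι1 k) (g2 : Matrix L.ι2 P.ι2 k) (hg : KHom P L g1 g2) =>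
    ((hmor.inv hX1 hX2').comp (kHom_fst P Q)).comp hg
  refine ⟨iInf_ker_eq_range_mul_inrMat _ hX1 (fun f => ?_)
      (fun u hu => hP.1 u fun g1 g2 hg => ?_),
    iInf_ker_eq_range_mul_inrMat _ hX2 (fun f => ?_) (fun v hv => hP.2 v fun g1 g2 hg => ?_)⟩
  · rw [Matrix.mul_assoc]
    exact (hkill f).1
  · simpa [Matrix.mul_assoc, hX1', fromCols_mul_fromRows] using hu ⟨(_, _), hproj g1 g2 hg⟩
  · rw [Matrix.mul_assoc]
    exact (hkill f).2
  · simpa [Matrix.mul_assoc, hX2', fromCols_mul_fromRows] using hv ⟨(_, _), hproj g1 g2 hg⟩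

theorem kronecker_reject_eq_general (M P R I : KRep k)
    (hP : IsPreprojectiveSum P) (hR : IsRegularSum R) (hI : IsPreinjectiveSum I)
    (X1 : Matrix M.ι1 (KDsum P (KDsum R I)).ι1 k)
    (X2 : Matrix M.ι2 (KDsum P (KDsum R I)).ι2 k)
    (X1' : Matrix (KDsum P (KDsum R I)).ι1 M.ι1 k)
    (X2' : Matrix (KDsum P (KDsum R I)).ι2 M.ι2 k)
    (hX1 : X1 * X1' = 1) (hX1' : X1' * X1 = 1)
    (hX2 : X2 * X2' = 1) (hX2' : X2' * X2 = 1)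
    (hmor : KHom (KDsum P (KDsum R I)) M X1 X2) :
    (⨅ f : {p : Matrix (Prep (k := k) (Fintype.card M.ι2)).ι1 M.ι1 k ×
        Matrix (Prep (k := k) (Fintype.card M.ι2)).ι2 M.ι2 k //
        KHom M (Prep (Fintype.card M.ι2)) p.1 p.2},
      LinearMap.ker (f.1.1.mulVecLin))
        = LinearMap.range ((X1 * (inrMat P.ι1 (R.ι1 ⊕ I.ι1) :
            Matrix (KDsum P (KDsum R I)).ι1 (R.ι1 ⊕ I.ι1) k)).mulVecLin) ∧
    (⨅ f : {p : Matrix (Prep (k := k) (Fintype.card M.ι2)).ι1 M.ι1 k ×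
        Matrix (Prep (k := k) (Fintype.card M.ι2)).ι2 M.ι2 k //
        KHom M (Prep (Fintype.card M.ι2)) p.1 p.2},
      LinearMap.ker (f.1.2.mulVecLin))
        = LinearMap.range ((X2 * (inrMat P.ι2 (R.ι2 ⊕ I.ι2) :
            Matrix (KDsum P (KDsum R I)).ι2 (R.ι2 ⊕ I.ι2) k)).mulVecLin) := by
  have hcard : Fintype.card P.ι2 ≤ Fintype.card M.ι2 :=
    (Fintype.card_sum (α := P.ι2) (β := (KDsum R I).ι2) ▸ Nat.le_add_right _ _).trans
      (card_le_card_of_mul_eq_one hX2')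
  exact iInf_ker_eq_range_inr_of_kHom_kDsum (hP.isCogeneratedBy_prep hcard)
    (homVanishes_kDsum (hR.homVanishes_prep _) (hI.homVanishes_prep _)) hX1 hX1' hX2 hX2' hmor

/-- let `M` be a Kronecker representation with dimension vector
`(d1, d2)` and `M ≅ P_M ⊕ R_M ⊕ I_M` (via `(X1, X2)`) its decomposition into
preprojective, regular and preinjective parts.  Then the reject of `P_{d2}` in `M`,
`Rej_M(P_{d2}) = ⋂ {Ker f | f ∈ Hom(M, P_{d2})}`, equals `R_M ⊕ I_M`
(i.e. the image under the isomorphism of the regular-plus-preinjective summand),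
at both vertices. -/
theorem kronecker_reject_eq [IsAlgClosed k] (M P R I : KRep k)
    (hP : IsPreprojectiveSum P) (hR : IsRegularSum R) (hI : IsPreinjectiveSum I)
    (X1 : Matrix M.ι1 (KDsum P (KDsum R I)).ι1 k)
    (X2 : Matrix M.ι2 (KDsum P (KDsum R I)).ι2 k)
    (X1' : Matrix (KDsum P (KDsum R I)).ι1 M.ι1 k)
    (X2' : Matrix (KDsum P (KDsum R I)).ι2 M.ι2 k)
    (hX1 : X1 * X1' = 1) (hX1' : X1' * X1 = 1)
    (hX2 : X2 * X2' = 1) (hX2' : X2' * X2 = 1)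
    (hmor : KHom (KDsum P (KDsum R I)) M X1 X2) :
    (⨅ f : {p : Matrix (Prep (k := k) (Fintype.card M.ι2)).ι1 M.ι1 k ×
        Matrix (Prep (k := k) (Fintype.card M.ι2)).ι2 M.ι2 k //
        KHom M (Prep (Fintype.card M.ι2)) p.1 p.2},
      LinearMap.ker (f.1.1.mulVecLin))
        = LinearMap.range ((X1 * (inrMat P.ι1 (R.ι1 ⊕ I.ι1) :
            Matrix (KDsum P (KDsum R I)).ι1 (R.ι1 ⊕ I.ι1) k)).mulVecLin) ∧
    (⨅ f : {p : Matrix (Prep (k := k) (Fintype.card M.ι2)).ι1 M.ι1 k ×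
        Matrix (Prep (k := k) (Fintype.card M.ι2)).ι2 M.ι2 k //
        KHom M (Prep (Fintype.card M.ι2)) p.1 p.2},
      LinearMap.ker (f.1.2.mulVecLin))
        = LinearMap.range ((X2 * (inrMat P.ι2 (R.ι2 ⊕ I.ι2) :
            Matrix (KDsum P (KDsum R I)).ι2 (R.ι2 ⊕ I.ι2) k)).mulVecLin) :=
  kronecker_reject_eq_general M P R I hP hR hI X1 X2 X1' X2' hX1 hX1' hX2 hX2' hmor
end
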